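/- If suf(i) is the largest L-suffix among all L-suffixes starting with a fixed character t, or the smallest LMS-suffix among all LMS-suffixes starting with t, then i > 1 implies T[i-1] ≠ t. -/

import Mathlib

/-!
Two adjacent suffixes that begin with the same character have the same type, because
`suf(i-1) = c :: suf(i)` and `suf(i) = c :: suf(i+1)` compare exactly as `suf(i)` and `suf(i+1)` do.
So if `T[i-1] = T[i] = t`, then for an L-suffix `suf(i)` the suffix `suf(i-1)` is a larger L-suffix
starting with `t`, and for an S-suffix `suf(i)` the suffix `suf(i-1)` is again of type S, so `suf(i)`
is not LMS. The case `i = N` is excluded because `T[N]` is smaller than every other character.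
-/

variable {α : Type*}

/-- The suffix of `T` starting at (1-based) position `i`. -/
def Suf (T : List α) (i : ℕ) : List α := T.drop (i - 1)

/-- The (1-based) `i`-th character of `T`, i.e. the first character of `Suf T i`. -/
def Chr [Inhabited α] (T : List α) (i : ℕ) : α := (Suf T i).headI

/-- `Suf T i` is lexicographically smaller than `Suf T j`. -/
def SufLt [LT α] (T : List α) (i j : ℕ) : Prop := List.Lex (· < ·) (Suf T i) (Suf T j)

/-- `Suf T i` is an S-suffix (position in range, and `i = N` or `suf i < suf (i+1)`). -/
def IsS [LinearOrder α] (T : List α) (i : ℕ) : Prop :=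
  1 ≤ i ∧ i ≤ T.length ∧ (i = T.length ∨ SufLt T i (i + 1))

/-- `Suf T i` is an L-suffix (position in range and not an S-suffix). -/
def IsL [LinearOrder α] (T : List α) (i : ℕ) : Prop :=
  1 ≤ i ∧ i ≤ T.length ∧ ¬ (i = T.length ∨ SufLt T i (i + 1))

/-- `Suf T i` is an LMS-suffix: an S-suffix whose preceding suffix is an L-suffix. -/
def IsLMS [LinearOrder α] (T : List α) (i : ℕ) : Prop :=
  1 < i ∧ IsS T i ∧ IsL T (i - 1)

/-- The last character of `T` is strictly smaller than every other character of `T`. -/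
def LastSmallest [Inhabited α] [LinearOrder α] (T : List α) : Prop :=
  ∀ i, 1 ≤ i → i < T.length → Chr T T.length < Chr T i


theorem suf_eq_cons [Inhabited α] {T : List α} {i : ℕ} (h1 : 1 ≤ i) (hi : i ≤ T.length) :
    Suf T i = Chr T i :: Suf T (i + 1) := by
  have hlt : i - 1 < T.length := by omega
  simp only [Suf, Chr, List.drop_eq_getElem_cons hlt, List.headI_cons, Nat.add_sub_cancel]
  rw [Nat.sub_add_cancel h1]

theorem suf_pred_eq_cons [Inhabited α] {T : List α} {i : ℕ} (h1 : 1 < i) (hi : i ≤ T.length) :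
    Suf T (i - 1) = Chr T (i - 1) :: Suf T i := by
  simpa only [Nat.sub_add_cancel h1.le] using suf_eq_cons (T := T) (i := i - 1) (by omega) (by omega)

theorem suf_pred_ne [Inhabited α] {T : List α} {i : ℕ} (h1 : 1 < i) (hi : i ≤ T.length) :
    Suf T (i - 1) ≠ Suf T i := by
  rw [suf_pred_eq_cons h1 hi]
  exact List.cons_ne_self _ _

section SuffixTypes

variable [Inhabited α] [LinearOrder α] {T : List α} {i : ℕ}

theorem sufLt_pred_iff_of_chr_eq (h1 : 1 < i) (hi : i ≤ T.length)
    (hc : Chr T (i - 1) = Chr T i) : SufLt T (i - 1) i ↔ SufLt T i (i + 1) := by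
  rw [SufLt, SufLt, suf_pred_eq_cons h1 hi, suf_eq_cons h1.le hi, hc]
  exact List.lex_cons_iff

theorem IsL.pred_of_chr_eq (hL : IsL T i) (h1 : 1 < i) (hc : Chr T (i - 1) = Chr T i) :
    IsL T (i - 1) := by
  obtain ⟨-, hi, hnS⟩ := hL
  refine ⟨by omega, by omega, ?_⟩
  rintro (hN | hlt)
  · omega
  · rw [Nat.sub_add_cancel h1.le, sufLt_pred_iff_of_chr_eq h1 hi hc] at hlt
    exact hnS (Or.inr hlt)

theorem IsS.pred_of_chr_eq (hlast : LastSmallest T) (hS : IsS T i) (h1 : 1 < i)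
    (hc : Chr T (i - 1) = Chr T i) : IsS T (i - 1) := by
  obtain ⟨-, hi, hN | hlt⟩ := hS
  · subst hN
    exact absurd (hc ▸ hlast (T.length - 1) (by omega) (by omega)) (lt_irrefl _)
  · refine ⟨by omega, by omega, Or.inr ?_⟩
    rw [Nat.sub_add_cancel h1.le, sufLt_pred_iff_of_chr_eq h1 hi hc]
    exact hlt

theorem IsLMS.chr_pred_ne (hlast : LastSmallest T) (hLMS : IsLMS T i) :
    Chr T (i - 1) ≠ Chr T i := by
  obtain ⟨h1, hS, -, -, hnS⟩ := hLMS
  intro hc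
  obtain ⟨-, -, hS'⟩ := hS.pred_of_chr_eq hlast h1 hc
  exact hnS hS'

end SuffixTypes

/-- If `suf i` is the lexicographically largest L-suffix starting with `t`, or the
lexicographically smallest LMS-suffix starting with `t`, then `i > 1` implies
`T[i-1] ≠ t`. -/
theorem stmt9 [Inhabited α] [LinearOrder α] (T : List α) (hlast : LastSmallest T)
    (i : ℕ) (t : α)
    (h : (IsL T i ∧ Chr T i = t ∧
            ∀ j, IsL T j → Chr T j = t → Suf T j = Suf T i ∨ SufLt T j i) ∨
         (IsLMS T i ∧ Chr T i = t ∧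
            ∀ j, IsLMS T j → Chr T j = t → Suf T j = Suf T i ∨ SufLt T i j)) :
    1 < i → Chr T (i - 1) ≠ t := by
  intro h1 hc
  rcases h with ⟨hL, rfl, hmax⟩ | ⟨hLMS, rfl, -⟩
  · have hi : i ≤ T.length := hL.2.1
    rcases hmax (i - 1) (hL.pred_of_chr_eq h1 hc) hc with heq | hlt
    · exact suf_pred_ne h1 hi heq
    · exact hL.2.2 (Or.inr ((sufLt_pred_iff_of_chr_eq h1 hi hc).mp hlt))
  · exact hLMS.chr_pred_ne hlast hc
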